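/- arXiv:1501.04925 — 2 statements merged into one kernel-verified Lean document; each statement's English description precedes it below -/
import Mathlib

section
/- Consider the discrete-time linear time-varying system x_{t+1} = A_t x_t + B_t u_t + C_t a_t with time horizon T and adversary constraint set Adv = { a = (a_0,…,a_{T-1}) : Σ_{s=0}^{T-1} ‖a_s‖² ≤ b } for a budget b ≥ 0. Fix a time t ∈ {0,…,T}, an initial state x_0 ∈ ℝ^n and a control sequence u. If the adversary controllability Gramian W_t = Σ_{s=0}^{t-1} α(t,s+1) C_s C_sᵀ α(t,s+1)ᵀ is invertible, then the reachable set at time t over all admissible adversary inputs decomposes exactly as Reach(x_0, u, Adv, t) = { ξ(x_0, u, 0, t) } ⊕ { x ∈ ℝ^n : xᵀ W_t^{-1} x ≤ b }; that is, the adversary leverage at time t is exactly the ellipsoid { x : xᵀ W_t^{-1} x ≤ b }, independent of x_0 and u. -/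
/-!
By linearity the state at time `t` is the adversary-free state plus `∑_{s<t} M_s a_s` with
`M_s = α(t, s+1) C_s`, and `W = ∑_{s<t} M_s M_sᵀ`. The input `a_s = M_sᵀ W⁻¹ z` reaches `z` with
energy `zᵀ W⁻¹ z`, and any other input `a` reaching `z` differs from it by a vector orthogonal to it,
so it has energy at least `zᵀ W⁻¹ z`.
-/

open Finset Matrix Pointwise

noncomputable section

/-- Transition matrix `α(t₁, t₀)`: `α(t₀,t₀) = I`, `α(t₁+1,t₀) = A t₁ * α(t₁,t₀)`. -/
def transMat {n : ℕ} (A : ℕ → Matrix (Fin n) (Fin n) ℝ) : ℕ → ℕ → Matrix (Fin n) (Fin n) ℝ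
  | 0, _ => 1
  | t + 1, t0 => if t + 1 ≤ t0 then 1 else A t * transMat A t t0

/-- State `x_t` of the system `x_{t+1} = A_t x_t + B_t u_t + C_t a_t`. -/
def traj {n m l : ℕ} (A : ℕ → Matrix (Fin n) (Fin n) ℝ)
    (B : ℕ → Matrix (Fin n) (Fin m) ℝ) (C : ℕ → Matrix (Fin n) (Fin l) ℝ)
    (x0 : EuclideanSpace ℝ (Fin n)) (u : ℕ → EuclideanSpace ℝ (Fin m))
    (a : ℕ → EuclideanSpace ℝ (Fin l)) : ℕ → EuclideanSpace ℝ (Fin n)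
  | 0 => x0
  | t + 1 => WithLp.toLp 2 ((A t).mulVec (traj A B C x0 u a t) + (B t).mulVec (u t) + (C t).mulVec (a t))

theorem EuclideanSpace.real_norm_sq_eq_dotProduct {ι : Type*} [Fintype ι]
    (v : EuclideanSpace ℝ ι) : ‖v‖ ^ 2 = v ⬝ᵥ v := by
  rw [← real_inner_self_eq_norm_sq, EuclideanSpace.inner_eq_star_dotProduct, star_trivial]

namespace Matrix

variable {ι m k : Type*} [Fintype m] [Fintype k] (S : Finset ι) (M : ι → Matrix m k ℝ)

def gramian : Matrix m m ℝ := ∑ s ∈ S, M s * (M s)ᵀ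

theorem gramian_mulVec (v : m → ℝ) :
    gramian S M *ᵥ v = ∑ s ∈ S, M s *ᵥ ((M s)ᵀ *ᵥ v) := by
  simp only [gramian, sum_mulVec, mulVec_mulVec]

variable [DecidableEq m]

/-- `Mᵀ W⁻¹ z` is the least-norm solution `a` of `∑ s ∈ S, M s *ᵥ a s = z`. -/
def minEnergyInput (z : m → ℝ) (s : ι) : k → ℝ := (M s)ᵀ *ᵥ ((gramian S M)⁻¹ *ᵥ z)

variable {S M}

theorem sum_mulVec_minEnergyInput (hW : IsUnit (gramian S M).det) (z : m → ℝ) :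
    ∑ s ∈ S, M s *ᵥ minEnergyInput S M z s = z := by
  simp only [minEnergyInput]
  rw [← gramian_mulVec, mulVec_mulVec, mul_nonsing_inv _ hW, one_mulVec]

theorem sum_minEnergyInput_dotProduct (z : m → ℝ) (a : ι → k → ℝ) :
    ∑ s ∈ S, minEnergyInput S M z s ⬝ᵥ a s =
      ((gramian S M)⁻¹ *ᵥ z) ⬝ᵥ ∑ s ∈ S, M s *ᵥ a s := by
  simp only [minEnergyInput, dotProduct_sum, mulVec_transpose, dotProduct_mulVec]

theorem sum_minEnergyInput_dotProduct_self (hW : IsUnit (gramian S M).det) (z : m → ℝ) :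
    ∑ s ∈ S, minEnergyInput S M z s ⬝ᵥ minEnergyInput S M z s =
      z ⬝ᵥ ((gramian S M)⁻¹ *ᵥ z) := by
  rw [sum_minEnergyInput_dotProduct, sum_mulVec_minEnergyInput hW, dotProduct_comm]

theorem dotProduct_gramian_inv_mulVec_le (hW : IsUnit (gramian S M).det) (a : ι → k → ℝ) :
    (∑ s ∈ S, M s *ᵥ a s) ⬝ᵥ ((gramian S M)⁻¹ *ᵥ ∑ s ∈ S, M s *ᵥ a s) ≤
      ∑ s ∈ S, a s ⬝ᵥ a s := by
  set z := ∑ s ∈ S, M s *ᵥ a s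
  set a' := minEnergyInput S M z
  have hcross : ∑ s ∈ S, a' s ⬝ᵥ a s = z ⬝ᵥ ((gramian S M)⁻¹ *ᵥ z) := by
    rw [sum_minEnergyInput_dotProduct, dotProduct_comm]
  have hexpand : ∀ x y : k → ℝ, (x - y) ⬝ᵥ (x - y) = x ⬝ᵥ x - 2 * (y ⬝ᵥ x) + y ⬝ᵥ y := by
    intro x y
    simp only [sub_dotProduct, dotProduct_sub, dotProduct_comm x y]
    ring
  have hdiff : 0 ≤ ∑ s ∈ S, (a s - a' s) ⬝ᵥ (a s - a' s) :=
    Finset.sum_nonneg fun s _ => by simpa using dotProduct_self_star_nonneg (a s - a' s)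
  have hself : ∑ s ∈ S, a' s ⬝ᵥ a' s = z ⬝ᵥ ((gramian S M)⁻¹ *ᵥ z) :=
    sum_minEnergyInput_dotProduct_self hW z
  simp only [hexpand, Finset.sum_add_distrib, Finset.sum_sub_distrib, ← Finset.mul_sum, hcross,
    hself] at hdiff
  linarith

variable [DecidableEq ι] {S' : Finset ι}

theorem setOf_sum_mulVec_energy_le_eq_ellipsoid (hW : IsUnit (gramian S M).det)
    (hS : S ⊆ S') (b : ℝ) :
    {x : EuclideanSpace ℝ m | ∃ a : ι → EuclideanSpace ℝ k,
        ∑ s ∈ S', ‖a s‖ ^ 2 ≤ b ∧ x = WithLp.toLp 2 (∑ s ∈ S, M s *ᵥ a s)} =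
      {x : EuclideanSpace ℝ m | x ⬝ᵥ (gramian S M)⁻¹ *ᵥ x ≤ b} := by
  ext x
  constructor
  · rintro ⟨a, hab, rfl⟩
    calc _ ≤ ∑ s ∈ S, a s ⬝ᵥ a s := dotProduct_gramian_inv_mulVec_le hW _
      _ = ∑ s ∈ S, ‖a s‖ ^ 2 := by simp only [EuclideanSpace.real_norm_sq_eq_dotProduct]
      _ ≤ ∑ s ∈ S', ‖a s‖ ^ 2 := sum_le_sum_of_subset_of_nonneg hS fun _ _ _ => sq_nonneg _
      _ ≤ b := hab
  · intro hx
    set a : ι → EuclideanSpace ℝ k := fun s =>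
      if s ∈ S then WithLp.toLp 2 (minEnergyInput S M x s) else 0
    have ha : ∀ s ∈ S, a s = WithLp.toLp 2 (minEnergyInput S M x s) := fun s hs => if_pos hs
    refine ⟨a, ?_, ?_⟩
    · calc ∑ s ∈ S', ‖a s‖ ^ 2 = ∑ s ∈ S, ‖a s‖ ^ 2 :=
            (sum_subset hS fun s _ hs => by simp [a, hs]).symm
        _ = ∑ s ∈ S, minEnergyInput S M x s ⬝ᵥ minEnergyInput S M x s :=
            sum_congr rfl fun s hs => by rw [ha s hs, EuclideanSpace.real_norm_sq_eq_dotProduct]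
        _ ≤ b := (sum_minEnergyInput_dotProduct_self hW x).trans_le hx
    · rw [sum_congr rfl fun s hs => by rw [ha s hs], sum_mulVec_minEnergyInput hW]

end Matrix

section LTISystem

variable {n m l : ℕ} (A : ℕ → Matrix (Fin n) (Fin n) ℝ)

theorem transMat_self (t : ℕ) : transMat A t t = 1 := by
  cases t <;> simp [transMat]

theorem transMat_succ_of_le {t t0 : ℕ} (h : t0 ≤ t) :
    transMat A (t + 1) t0 = A t * transMat A t t0 :=
  if_neg (by omega)

variable (B : ℕ → Matrix (Fin n) (Fin m) ℝ) (C : ℕ → Matrix (Fin n) (Fin l) ℝ)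
  (x0 : EuclideanSpace ℝ (Fin n)) (u : ℕ → EuclideanSpace ℝ (Fin m))

theorem traj_eq_traj_zero_add (a : ℕ → EuclideanSpace ℝ (Fin l)) (t : ℕ) :
    traj A B C x0 u a t = traj A B C x0 u (fun _ => 0) t +
      WithLp.toLp 2 (∑ s ∈ range t, (transMat A t (s + 1) * C s) *ᵥ a s) := by
  induction t with
  | zero => simp [traj]
  | succ t ih =>
    have hsum : ∑ s ∈ range (t + 1), (transMat A (t + 1) (s + 1) * C s) *ᵥ a s =
        A t *ᵥ ∑ s ∈ range t, (transMat A t (s + 1) * C s) *ᵥ a s + C t *ᵥ a t := by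
      rw [sum_range_succ, transMat_self, Matrix.one_mul, mulVec_sum]
      congr 1
      refine sum_congr rfl fun s hs => ?_
      rw [transMat_succ_of_le A (mem_range.mp hs), Matrix.mul_assoc, ← mulVec_mulVec]
    simp only [traj, ih, hsum]
    apply WithLp.ofLp_injective 2
    simp only [WithLp.ofLp_add, WithLp.ofLp_zero, mulVec_add, mulVec_zero]
    abel

end LTISystem

theorem adversary_leverage_general {n m l : ℕ} (A : ℕ → Matrix (Fin n) (Fin n) ℝ)
    (B : ℕ → Matrix (Fin n) (Fin m) ℝ) (C : ℕ → Matrix (Fin n) (Fin l) ℝ)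
    (T : ℕ) (b : ℝ) (t : ℕ) (ht : t ≤ T)
    (x0 : EuclideanSpace ℝ (Fin n)) (u : ℕ → EuclideanSpace ℝ (Fin m))
    (W : Matrix (Fin n) (Fin n) ℝ)
    (hW : W = ∑ s ∈ Finset.range t,
        transMat A t (s + 1) * C s * (C s)ᵀ * (transMat A t (s + 1))ᵀ)
    (hWinv : IsUnit W) :
    {x : EuclideanSpace ℝ (Fin n) |
        ∃ a : ℕ → EuclideanSpace ℝ (Fin l),
          (∑ s ∈ Finset.range T, ‖a s‖ ^ 2) ≤ b ∧ x = traj A B C x0 u a t} =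
      {traj A B C x0 u (fun _ => 0) t} +
        {x : EuclideanSpace ℝ (Fin n) | x ⬝ᵥ (W⁻¹).mulVec x ≤ b} := by
  obtain rfl : W = gramian (range t) fun s => transMat A t (s + 1) * C s := by
    rw [hW, gramian]
    exact sum_congr rfl fun s _ => by simp only [transpose_mul, Matrix.mul_assoc]
  have hdet := (isUnit_iff_isUnit_det _).mp hWinv
  rw [Set.singleton_add,
    ← setOf_sum_mulVec_energy_le_eq_ellipsoid hdet (range_subset_range.mpr ht)]
  ext x
  simp only [Set.mem_ofPred_eq, Set.mem_image]
  constructor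
  · rintro ⟨a, hab, rfl⟩
    exact ⟨_, ⟨a, hab, rfl⟩, (traj_eq_traj_zero_add ..).symm⟩
  · rintro ⟨_, ⟨a, hab, rfl⟩, rfl⟩
    exact ⟨a, hab, (traj_eq_traj_zero_add ..).symm⟩

/-- The reachable set at time `t ≤ T` over all budget-`b` adversary inputs is
exactly the adversary-free state plus the Gramian ellipsoid (the adversary
leverage), which is independent of `x₀` and `u`. -/
theorem adversary_leverage {n m l : ℕ} (A : ℕ → Matrix (Fin n) (Fin n) ℝ)
    (B : ℕ → Matrix (Fin n) (Fin m) ℝ) (C : ℕ → Matrix (Fin n) (Fin l) ℝ)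
    (T : ℕ) (b : ℝ) (hb : 0 ≤ b) (t : ℕ) (ht : t ≤ T)
    (x0 : EuclideanSpace ℝ (Fin n)) (u : ℕ → EuclideanSpace ℝ (Fin m))
    (W : Matrix (Fin n) (Fin n) ℝ)
    (hW : W = ∑ s ∈ Finset.range t,
        transMat A t (s + 1) * C s * (C s)ᵀ * (transMat A t (s + 1))ᵀ)
    (hWinv : IsUnit W) :
    {x : EuclideanSpace ℝ (Fin n) |
        ∃ a : ℕ → EuclideanSpace ℝ (Fin l),
          (∑ s ∈ Finset.range T, ‖a s‖ ^ 2) ≤ b ∧ x = traj A B C x0 u a t} =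
      {traj A B C x0 u (fun _ => 0) t} +
        {x : EuclideanSpace ℝ (Fin n) | x ⬝ᵥ (W⁻¹).mulVec x ≤ b} :=
  adversary_leverage_general A B C T b t ht x0 u W hW hWinv
end
end

section
/- (Soundness of the synthesis reduction.) Consider the discrete-time linear time-varying system x_{t+1} = A_t x_t + B_t u_t + C_t a_t with horizon T, initial set Init = B_δ(θ), adversary constraint Adv = { a : Σ_{s} ‖a_s‖² ≤ b }, safe sets Safe_t ⊆ ℝ^n for t ∈ {0,…,T}, and goal set Goal ⊆ ℝ^n. For each t let R_t and B_t be sets with Reach(B_δ(θ), u, Adv, t) = { ξ(θ, u, 0, t) } ⊕ R_t ⊕ B_t, and let Safe'_t and Goal' be sets satisfying Safe'_t ⊕ R_t ⊕ B_t ⊆ Safe_t and Goal' ⊕ R_T ⊕ B_T ⊆ Goal. If a control sequence u satisfies ξ(θ, u, 0, t) ∈ Safe'_t for every t ∈ {0,…,T} and ξ(θ, u, 0, T) ∈ Goal', then u solves the adversarial reach-avoid problem: for every initial state x_0 ∈ B_δ(θ) and every adversary input a ∈ Adv, ξ(x_0, u, a, t) ∈ Safe_t for all t ∈ {0,…,T},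 and ξ(x_0, u, a, T) ∈ Goal. -/
open Finset Matrix Pointwise Metric

noncomputable section

lemma Set.mem_of_mem_singleton_add_add {α : Type*} [Add α] {p x : α} {S' S R E : Set α}
    (hx : x ∈ {p} + R + E) (hp : p ∈ S') (hS : S' + R + E ⊆ S) : x ∈ S :=
  hS (Set.add_subset_add_right (Set.add_subset_add_right (Set.singleton_subset_iff.2 hp)) hx)

/-- Soundness of the synthesis reduction: if the reach sets decompose as
nominal state ⊕ `R_t` ⊕ `B_t`, the strengthened constraints `Safe'_t`, `Goal'`
satisfy `Safe'_t ⊕ R_t ⊕ B_t ⊆ Safe_t` and `Goal' ⊕ R_T ⊕ B_T ⊆ Goal`, and the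
adversary-free trajectory from `θ` under `u` satisfies the strengthened
constraints, then `u` solves the adversarial reach-avoid problem. -/
theorem synthesis_sound {n m l : ℕ} (A : ℕ → Matrix (Fin n) (Fin n) ℝ)
    (B : ℕ → Matrix (Fin n) (Fin m) ℝ) (C : ℕ → Matrix (Fin n) (Fin l) ℝ)
    (T : ℕ) (δ : ℝ) (θ : EuclideanSpace ℝ (Fin n)) (b : ℝ)
    (Safe : ℕ → Set (EuclideanSpace ℝ (Fin n))) (Goal : Set (EuclideanSpace ℝ (Fin n)))
    (Rt Bt : ℕ → Set (EuclideanSpace ℝ (Fin n)))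
    (Safe' : ℕ → Set (EuclideanSpace ℝ (Fin n))) (Goal' : Set (EuclideanSpace ℝ (Fin n)))
    (u : ℕ → EuclideanSpace ℝ (Fin m))
    (hdecomp : ∀ t ≤ T,
      {x : EuclideanSpace ℝ (Fin n) |
          ∃ x0 ∈ Metric.closedBall θ δ, ∃ a : ℕ → EuclideanSpace ℝ (Fin l),
            (∑ s ∈ Finset.range T, ‖a s‖ ^ 2) ≤ b ∧ x = traj A B C x0 u a t} =
        {traj A B C θ u (fun _ => 0) t} + Rt t + Bt t)
    (hSafe' : ∀ t ≤ T, Safe' t + Rt t + Bt t ⊆ Safe t)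
    (hGoal' : Goal' + Rt T + Bt T ⊆ Goal)
    (huSafe : ∀ t ≤ T, traj A B C θ u (fun _ => 0) t ∈ Safe' t)
    (huGoal : traj A B C θ u (fun _ => 0) T ∈ Goal') :
    ∀ x0 ∈ Metric.closedBall θ δ,
      ∀ a : ℕ → EuclideanSpace ℝ (Fin l),
        (∑ s ∈ Finset.range T, ‖a s‖ ^ 2) ≤ b →
          (∀ t ≤ T, traj A B C x0 u a t ∈ Safe t) ∧
            traj A B C x0 u a T ∈ Goal := by
  intro x0 hx0 a ha
  have hreach : ∀ t ≤ T, traj A B C x0 u a t ∈ {traj A B C θ u (fun _ => 0) t} + Rt t + Bt t :=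
    fun t ht => hdecomp t ht ▸ ⟨x0, hx0, a, ha, rfl⟩
  exact ⟨fun t ht => Set.mem_of_mem_singleton_add_add (hreach t ht) (huSafe t ht) (hSafe' t ht),
    Set.mem_of_mem_singleton_add_add (hreach T le_rfl) huGoal hGoal'⟩
end
end
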